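/- Let d ≥ 2, let G be an additive commutative group, let w assign to each node of the d^n hypermesh its local model update in G, and for each edge E let s(·, E) : E → G be masks satisfying Σ_{i ∈ E} s(i, E) = 0. Then the total of the masked group aggregates over all edges satisfies Σ_{E edge} Σ_{i ∈ E} (w(i) + s(i, E)) = n • (Σ_{i node} w(i)); hence in the absence of malicious clients the server recovers exactly n times the sum of all true local updates. -/

import Mathlib

/-- The edge (group) through node `x` in direction `k` of the `d^n` hypermesh:
all nodes agreeing with `x` at every coordinate other than `k`. -/
def edgeThrough (n d : ℕ) (k : Fin n) (x : Fin n → Fin d) : Finset (Fin n → Fin d) :=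
  Finset.univ.filter (fun y => ∀ j, j ≠ k → y j = x j)

/-- A set of nodes is an edge of the `d^n` hypermesh when it is the edge through
some node in some direction. -/
def IsEdge (n d : ℕ) (E : Finset (Fin n → Fin d)) : Prop :=
  ∃ k x, E = edgeThrough n d k x

/-- The finset of all edges of the `d^n` hypermesh. -/
def hypermeshEdges (n d : ℕ) : Finset (Finset (Fin n → Fin d)) :=
  Finset.univ.image (fun p : Fin n × (Fin n → Fin d) => edgeThrough n d p.1 p.2)

/-!
Each node lies on exactly one edge per direction, and for `d ≥ 2` these `n` edges are distinct,
so it lies on exactly `n` edges. Summing the masked submissions edge by edge, the masks of each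
edge cancel, and exchanging the order of summation counts every true update `n` times.
-/

open Finset

section DoubleCounting

variable {α M : Type*} [AddCommMonoid M]

theorem sum_sum_mem_eq_sum_card_nsmul [Fintype α] [DecidableEq α] (𝓔 : Finset (Finset α)) (f : α → M) :
    ∑ E ∈ 𝓔, ∑ i ∈ E, f i = ∑ i, #{E ∈ 𝓔 | i ∈ E} • f i := by
  rw [sum_comm' (t' := univ) (s' := fun i => {E ∈ 𝓔 | i ∈ E}) (by simp)]
  simp only [sum_const]

theorem sum_sum_add_eq_of_sum_eq_zero (𝓔 : Finset (Finset α)) (w : α → M)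
    (s : α → Finset α → M) (hs : ∀ E ∈ 𝓔, ∑ i ∈ E, s i E = 0) :
    ∑ E ∈ 𝓔, ∑ i ∈ E, (w i + s i E) = ∑ E ∈ 𝓔, ∑ i ∈ E, w i :=
  sum_congr rfl fun E hE => by rw [sum_add_distrib, hs E hE, add_zero]

end DoubleCounting

section Hypermesh

variable {n d : ℕ}

theorem mem_edgeThrough {k : Fin n} {x y : Fin n → Fin d} :
    y ∈ edgeThrough n d k x ↔ ∀ j, j ≠ k → y j = x j := by
  simp [edgeThrough]

theorem mem_edgeThrough_self (k : Fin n) (x : Fin n → Fin d) : x ∈ edgeThrough n d k x :=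
  mem_edgeThrough.2 fun _ _ => rfl

theorem edgeThrough_eq_of_mem {k : Fin n} {x y : Fin n → Fin d}
    (h : y ∈ edgeThrough n d k x) : edgeThrough n d k x = edgeThrough n d k y := by
  rw [mem_edgeThrough] at h
  ext z
  simp only [mem_edgeThrough]
  exact forall₂_congr fun j hj => by rw [h j hj]

theorem edgeThrough_injective (hd : 2 ≤ d) (x : Fin n → Fin d) :
    Function.Injective fun k => edgeThrough n d k x := by
  intro k k' h
  by_contra hne
  have : Nontrivial (Fin d) := Fin.nontrivial_iff_two_le.2 hd
  obtain ⟨c, hc⟩ := exists_ne (x k)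
  -- `update x k c` lies on the `k`-edge through `x` but not on its `k'`-edge
  have hmem : Function.update x k c ∈ edgeThrough n d k x :=
    mem_edgeThrough.2 fun j hj => Function.update_of_ne hj _ _
  rw [show edgeThrough n d k x = edgeThrough n d k' x from h, mem_edgeThrough] at hmem
  exact hc (by simpa using hmem k hne)

theorem filter_mem_hypermeshEdges (x : Fin n → Fin d) :
    {E ∈ hypermeshEdges n d | x ∈ E} = univ.image fun k => edgeThrough n d k x := by
  ext E
  simp only [hypermeshEdges, mem_filter, mem_image, mem_univ, true_and, Prod.exists]
  constructor
  · rintro ⟨⟨k, y, rfl⟩, hx⟩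
    exact ⟨k, (edgeThrough_eq_of_mem hx).symm⟩
  · rintro ⟨k, rfl⟩
    exact ⟨⟨k, x, rfl⟩, mem_edgeThrough_self k x⟩

theorem card_filter_mem_hypermeshEdges (hd : 2 ≤ d) (x : Fin n → Fin d) :
    #{E ∈ hypermeshEdges n d | x ∈ E} = n := by
  rw [filter_mem_hypermeshEdges, card_image_of_injective _ (edgeThrough_injective hd x),
    card_univ, Fintype.card_fin]

end Hypermesh

/-- For `d ≥ 2`, if for every edge `E` the masks `s · E` of the clients in `E`
sum to zero, then the total of the masked group aggregates over all edges equals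
`n` times the sum of all true local updates. -/
theorem sum_masked_group_aggregates {n d : ℕ} (hd : 2 ≤ d) (G : Type*)
    [AddCommGroup G] (w : (Fin n → Fin d) → G)
    (s : (Fin n → Fin d) → Finset (Fin n → Fin d) → G)
    (hs : ∀ E ∈ hypermeshEdges n d, ∑ i ∈ E, s i E = 0) :
    ∑ E ∈ hypermeshEdges n d, ∑ i ∈ E, (w i + s i E) =
      n • ∑ i : Fin n → Fin d, w i := by
  rw [sum_sum_add_eq_of_sum_eq_zero _ w s hs, sum_sum_mem_eq_sum_card_nsmul, smul_sum]
  simp only [card_filter_mem_hypermeshEdges hd]
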